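/- There exists a universal constant C > 0 such that for every n ≥ 2 and every B ≥ 1, the critical Erdős–Rényi random graph G(n,1/n) satisfies E[ (1/n) Σ_{x ∈ [n]} ( diam(C(x)) ∧ (B n^{1/3}) ) ] ≤ C log(Bn); equivalently, E[ E_S[ diam(S₁) ∧ (B n^{1/3}) ] ] ≤ C log(Bn). -/

import Mathlib

open MeasureTheory Filter
open scoped ENNReal

/-- The Erdős–Rényi `G(n, 1/n)` measure on edge configurations of `K_n`:
each potential edge is retained (`true`) independently with probability `1/n`. -/
noncomputable def erMeasure (n : ℕ) : Measure (Sym2 (Fin n) → Bool) :=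
  Measure.pi fun _ => (PMF.bernoulli (min (n : ℝ≥0∞)⁻¹ 1).toNNReal
    (le_of_le_of_eq (ENNReal.toNNReal_mono ENNReal.one_ne_top (min_le_right _ _)) ENNReal.toNNReal_one)).toMeasure

instance (n : ℕ) : IsProbabilityMeasure (erMeasure n) := by
  unfold erMeasure; infer_instance

/-- The simple graph on `Fin n` determined by an edge configuration. -/
def graphOf {n : ℕ} (ω : Sym2 (Fin n) → Bool) : SimpleGraph (Fin n) where
  Adj u v := u ≠ v ∧ ω s(u, v) = true
  symm := by
    constructor
    intro u v h
    exact ⟨Ne.symm h.1, by rw [Sym2.eq_swap]; exact h.2⟩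
  loopless := by
    constructor
    intro u h
    exact h.1 rfl

/-- Size of the connected component of `v`. -/
noncomputable def compSize {n : ℕ} (G : SimpleGraph (Fin n)) (v : Fin n) : ℕ :=
  Nat.card {w : Fin n | G.Reachable v w}

/-- Diameter of a finite graph: maximal distance between two vertices. -/
noncomputable def gdiam {n : ℕ} (G : SimpleGraph (Fin n)) : ℕ :=
  Finset.univ.sup fun p : Fin n × Fin n => G.dist p.1 p.2

open scoped Classical in
/-- Diameter of the connected component of `x`. -/
noncomputable def compDiam {n : ℕ} (G : SimpleGraph (Fin n)) (x : Fin n) : ℕ :=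
  Finset.univ.sup fun p : Fin n × Fin n =>
    if G.Reachable x p.1 ∧ G.Reachable x p.2 then G.dist p.1 p.2 else 0

/-- Product of the weights of the edges of `T`. -/
noncomputable def treeWeight {n : ℕ} (w : Sym2 (Fin n) → ℝ) (T : SimpleGraph (Fin n)) : ℝ :=
  letI : Fintype T.edgeSet := Fintype.ofFinite _
  ∏ e ∈ T.edgeSet.toFinset, w e

open scoped Classical in
/-- Probability that the `w`-weighted uniform spanning tree of `K_n` lies in `E`. -/
noncomputable def ustProb {n : ℕ} (w : Sym2 (Fin n) → ℝ) (E : Set (SimpleGraph (Fin n))) : ℝ :=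
  (∑ T ∈ Finset.univ.filter (fun T : SimpleGraph (Fin n) => T.IsTree ∧ T ∈ E), treeWeight w T) /
    (∑ T ∈ Finset.univ.filter (fun T : SimpleGraph (Fin n) => T.IsTree), treeWeight w T)

/-- The random weights: heavy edges get weight `n^(1+γ)`, the others weight `1`. -/
noncomputable def weightFn (n : ℕ) (γ : ℝ) (ω : Sym2 (Fin n) → Bool) (e : Sym2 (Fin n)) : ℝ :=
  if ω e then (n : ℝ) ^ ((1 : ℝ) + γ) else 1

/-!
Bounding the truncated diameter by the diameter, and `diam C(x)` by twice the eccentricity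
`ecc(x)` of `x` in its component, it suffices to show `P(ecc(x) ≥ k) ≤ 3 / k`: summing over
`k ≤ n` gives `E[ecc(x)] ≤ 3 (1 + log n)`.

The tail bound is proved for the graph induced on any vertex set `S ∋ x`, by induction on `k`.
If `ecc(x) ≥ k + 1` in `G[S]`, some neighbour `y` of `x` has `ecc(y) ≥ k` in `G[S \ {x}]`, an
event that does not depend on the edges at `x`. Given `G[S \ {x}]`, with `N` such candidates
`y`, one of the edges `xy` is open with probability `1 - (1 - 1/n)^N`, which is concave in `N`;
by Jensen and `E[N] ≤ (n - 1) s` with `s = min(1, 3/k)` the probability is at most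
`1 - e^{-s} ≤ s - s^2/3 ≤ 3 / (k + 1)`.
-/

open Finset

section Bernoulli

variable {ι : Type*} [Fintype ι]

lemma Fintype.sum_prod_bool {R : Type*} [CommSemiring R] [DecidableEq ι] (f : ι → Bool → R) :
    ∑ ω : ι → Bool, ∏ i, f i (ω i) = ∏ i, (f i true + f i false) := by
  simp [← Fintype.prod_sum, add_comm]

noncomputable def bernoulliWeight (p : ℝ) (ω : ι → Bool) : ℝ :=
  ∏ i, if ω i then p else 1 - p

variable {p : ℝ}

lemma bernoulliWeight_nonneg (hp0 : 0 ≤ p) (hp1 : p ≤ 1) (ω : ι → Bool) :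
    0 ≤ bernoulliWeight p ω :=
  prod_nonneg fun i _ => by split <;> linarith

variable [DecidableEq ι]

noncomputable def bernoulliProb (p : ℝ) (A : (ι → Bool) → Prop) [DecidablePred A] : ℝ :=
  ∑ ω, bernoulliWeight p ω * if A ω then 1 else 0

lemma sum_bernoulliWeight (p : ℝ) : ∑ ω : ι → Bool, bernoulliWeight p ω = 1 := by
  simpa [bernoulliWeight] using
    Fintype.sum_prod_bool fun (_ : ι) (b : Bool) => if b then p else 1 - p

lemma bernoulliProb_mono (hp0 : 0 ≤ p) (hp1 : p ≤ 1) {A B : (ι → Bool) → Prop}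
    [DecidablePred A] [DecidablePred B] (h : ∀ ω, A ω → B ω) :
    bernoulliProb p A ≤ bernoulliProb p B := by
  refine sum_le_sum fun ω _ => mul_le_mul_of_nonneg_left ?_ (bernoulliWeight_nonneg hp0 hp1 ω)
  by_cases hA : A ω <;> simp [hA, h]
  split <;> norm_num

lemma bernoulliProb_le_one (hp0 : 0 ≤ p) (hp1 : p ≤ 1) (A : (ι → Bool) → Prop)
    [DecidablePred A] :
    bernoulliProb p A ≤ 1 := by
  calc bernoulliProb p A ≤ bernoulliProb p fun _ => True :=
        bernoulliProb_mono hp0 hp1 fun _ _ => trivial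
    _ = 1 := by simp [bernoulliProb, sum_bernoulliWeight]

lemma bernoulliProb_not (p : ℝ) (A : (ι → Bool) → Prop) [DecidablePred A] :
    bernoulliProb p (fun ω => ¬ A ω) = 1 - bernoulliProb p A := by
  rw [eq_sub_iff_add_eq, bernoulliProb, bernoulliProb, ← sum_add_distrib]
  refine (sum_congr rfl fun ω _ => ?_).trans (sum_bernoulliWeight p)
  by_cases hA : A ω <;> simp [hA]

lemma bernoulliProb_forall_false (p : ℝ) (s : Finset ι) :
    bernoulliProb p (fun ω => ∀ i ∈ s, ω i = false) = (1 - p) ^ #s := by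
  have hω : ∀ ω : ι → Bool,
      (bernoulliWeight p ω * if ∀ i ∈ s, ω i = false then 1 else 0) =
        ∏ i, if ω i then (if i ∈ s then 0 else p) else 1 - p := by
    intro ω
    by_cases h : ∀ i ∈ s, ω i = false
    · rw [if_pos h, mul_one, bernoulliWeight]
      refine prod_congr rfl fun i _ => ?_
      by_cases hi : i ∈ s <;> simp [hi, h i]
    · obtain ⟨i, hi, hωi⟩ := not_forall₂.1 h
      rw [if_neg h, mul_zero, eq_comm]
      exact prod_eq_zero (mem_univ i) (by simp_all)
  rw [bernoulliProb, sum_congr rfl fun ω _ => hω ω,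
    Fintype.sum_prod_bool fun i (b : Bool) => if b then (if i ∈ s then 0 else p) else 1 - p]
  simp [ite_add, prod_ite_mem]

lemma bernoulliProb_congr {A B : (ι → Bool) → Prop} [DecidablePred A] [DecidablePred B]
    (h : ∀ ω, A ω ↔ B ω) : bernoulliProb p A = bernoulliProb p B :=
  sum_congr rfl fun ω _ => by simp only [h]

lemma bernoulliWeight_piecewise_mul_piecewise (p : ℝ) (J : Finset ι) (ξ η : ι → Bool) :
    bernoulliWeight p (J.piecewise ξ η) * bernoulliWeight p (J.piecewise η ξ) =
      bernoulliWeight p ξ * bernoulliWeight p η := by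
  simp only [bernoulliWeight, ← prod_mul_distrib]
  refine prod_congr rfl fun i _ => ?_
  by_cases hi : i ∈ J <;> simp [hi, mul_comm]

/-- Conditioning on the coordinates outside `J`. -/
lemma sum_bernoulliWeight_mul_eq_sum_piecewise (p : ℝ) (J : Finset ι)
    (F : (ι → Bool) → ℝ) :
    ∑ ω, bernoulliWeight p ω * F ω =
      ∑ η, bernoulliWeight p η * ∑ ξ, bernoulliWeight p ξ * F (J.piecewise ξ η) := by
  let σ : Equiv.Perm ((ι → Bool) × (ι → Bool)) :=
    Function.Involutive.toPerm (fun ξη => (J.piecewise ξη.1 ξη.2, J.piecewise ξη.2 ξη.1))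
      fun ξη => by ext i <;> by_cases hi : i ∈ J <;> simp [hi]
  calc ∑ ω, bernoulliWeight p ω * F ω
      = ∑ ξη : (ι → Bool) × (ι → Bool),
          bernoulliWeight p ξη.1 * bernoulliWeight p ξη.2 * F ξη.1 := by
        simp [Fintype.sum_prod_type, mul_right_comm _ _ (F _), ← mul_sum, sum_bernoulliWeight]
    _ = ∑ ξη : (ι → Bool) × (ι → Bool),
          bernoulliWeight p (σ ξη).1 * bernoulliWeight p (σ ξη).2 * F (σ ξη).1 :=
        (Equiv.sum_comp σ _).symm
    _ = ∑ ξη : (ι → Bool) × (ι → Bool),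
          bernoulliWeight p ξη.2 *
            (bernoulliWeight p ξη.1 * F (J.piecewise ξη.1 ξη.2)) := by
        refine sum_congr rfl fun ξη _ => ?_
        rw [show σ ξη = (J.piecewise ξη.1 ξη.2, J.piecewise ξη.2 ξη.1) from rfl,
          bernoulliWeight_piecewise_mul_piecewise]
        ring
    _ = ∑ η, bernoulliWeight p η * ∑ ξ, bernoulliWeight p ξ * F (J.piecewise ξ η) := by
        rw [Fintype.sum_prod_type, sum_comm]
        simp only [mul_sum]

lemma bernoulliProb_eq_sum_piecewise (p : ℝ) (J : Finset ι) (A : (ι → Bool) → Prop)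
    [DecidablePred A] :
    bernoulliProb p A =
      ∑ η, bernoulliWeight p η * bernoulliProb p (fun ξ => A (J.piecewise ξ η)) :=
  sum_bernoulliWeight_mul_eq_sum_piecewise p J _

lemma bernoulliProb_exists_true (p : ℝ) (s : Finset ι) :
    bernoulliProb p (fun ω => ∃ i ∈ s, ω i = true) = 1 - (1 - p) ^ #s := by
  rw [← bernoulliProb_forall_false, ← bernoulliProb_not]
  exact bernoulliProb_congr fun ω => by simp

/-- The events `E y` do not see the coordinates `c y`, so conditionally on the other
coordinates the number `N` of `y ∈ T` with `E y` is fixed and the probability that some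
`c y` with `E y` is open is `1 - (1 - p) ^ N`; this is concave in `N`. -/
theorem bernoulliProb_le_of_imp_exists_open {α : Type*} (hp0 : 0 ≤ p) (hp1 : p < 1)
    {T : Finset α} {c : α → ι} (hc : Set.InjOn c T) (E : α → (ι → Bool) → Prop)
    [∀ y, DecidablePred (E y)]
    (hE : ∀ y ∈ T, ∀ ω ω', (∀ i ∉ T.image c, ω i = ω' i) → (E y ω ↔ E y ω'))
    (A : (ι → Bool) → Prop) [DecidablePred A]
    (hA : ∀ ω, A ω → ∃ y ∈ T, ω (c y) = true ∧ E y ω) :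
    bernoulliProb p A ≤ 1 - (1 - p) ^ ∑ y ∈ T, bernoulliProb p (E y) := by
  set J := T.image c
  set Y : (ι → Bool) → Finset α := fun η => T.filter (E · η)
  have hW : ∀ η : ι → Bool, 0 ≤ bernoulliWeight p η := bernoulliWeight_nonneg hp0 hp1.le
  have hcond : ∀ η, bernoulliProb p (fun ξ => ∃ y ∈ T,
      J.piecewise ξ η (c y) = true ∧ E y (J.piecewise ξ η)) = 1 - (1 - p) ^ #(Y η) := by
    intro η
    rw [← card_image_of_injOn (hc.mono (filter_subset _ T)), ← bernoulliProb_exists_true]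
    refine bernoulliProb_congr fun ξ => ?_
    have hagree : ∀ i ∉ J, J.piecewise ξ η i = η i := fun i hi =>
      piecewise_eq_of_notMem _ _ _ hi
    simp only [exists_mem_image, mem_filter, and_assoc]
    refine exists_congr fun y => and_congr_right fun hy => ?_
    rw [piecewise_eq_of_mem _ _ _ (mem_image_of_mem c hy), hE y hy _ _ hagree, and_comm]
  have hmean :
      ∑ η, bernoulliWeight p η * (#(Y η) : ℝ) = ∑ y ∈ T, bernoulliProb p (E y) := by
    simp only [Y, card_filter, Nat.cast_sum, Nat.cast_ite, Nat.cast_one, Nat.cast_zero, mul_sum]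
    exact sum_comm
  have hjensen := (convexOn_rpow_left (by linarith : 0 < 1 - p)).map_sum_le
    (t := (univ : Finset (ι → Bool))) (w := bernoulliWeight p) (p := fun η => (#(Y η) : ℝ))
    (fun η _ => hW η) (sum_bernoulliWeight p) (fun _ _ => Set.mem_univ _)
  simp only [smul_eq_mul, Real.rpow_natCast, hmean] at hjensen
  calc bernoulliProb p A
      ≤ bernoulliProb p (fun ω => ∃ y ∈ T, ω (c y) = true ∧ E y ω) :=
        bernoulliProb_mono hp0 hp1.le hA
    _ = ∑ η, bernoulliWeight p η * (1 - (1 - p) ^ #(Y η)) := by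
        rw [bernoulliProb_eq_sum_piecewise p J]
        exact sum_congr rfl fun η _ => by rw [hcond]
    _ = 1 - ∑ η, bernoulliWeight p η * (1 - p) ^ #(Y η) := by
        simp only [mul_sub, mul_one, sum_sub_distrib, sum_bernoulliWeight]
    _ ≤ 1 - (1 - p) ^ ∑ y ∈ T, bernoulliProb p (E y) := by linarith

end Bernoulli

namespace SimpleGraph

variable {V : Type*}

def graphOn (S : Finset V) (ω : Sym2 V → Bool) : SimpleGraph V where
  Adj u v := u ∈ S ∧ v ∈ S ∧ u ≠ v ∧ ω s(u, v) = true
  symm := ⟨fun _ _ h => ⟨h.2.1, h.1, h.2.2.1.symm, Sym2.eq_swap ▸ h.2.2.2⟩⟩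
  loopless := ⟨fun _ h => h.2.2.1 rfl⟩

lemma graphOn_erase [DecidableEq V] (S : Finset V) (x : V) (ω : Sym2 V → Bool) :
    graphOn (S.erase x) ω = (graphOn S ω).deleteIncidenceSet x := by
  ext u v
  simp only [graphOn, deleteIncidenceSet_adj, mem_erase]
  tauto

lemma graphOn_congr {S : Finset V} {ω ω' : Sym2 V → Bool}
    (h : ∀ u ∈ S, ∀ v ∈ S, ω s(u, v) = ω' s(u, v)) : graphOn S ω = graphOn S ω' := by
  ext u v
  exact and_congr_right fun hu => and_congr_right fun hv => by rw [h u hu v hv]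

variable [Fintype V] (G : SimpleGraph V)

/-- Eccentricity of `x` within its connected component: `G.dist` vanishes between vertices
of different components. -/
noncomputable def compEccent (x : V) : ℕ := univ.sup (G.dist x)

lemma dist_le_compEccent (x v : V) : G.dist x v ≤ G.compEccent x :=
  le_sup (f := G.dist x) (mem_univ v)

lemma compEccent_lt_card (x : V) : G.compEccent x < Fintype.card V := by
  refine (Finset.sup_lt_iff (Fintype.card_pos_iff.2 ⟨x⟩)).2 fun v _ => ?_
  by_cases h : G.Reachable x v
  · obtain ⟨p, hp, hlen⟩ := h.exists_path_of_dist
    exact hlen ▸ hp.length_lt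
  · simpa [dist_eq_zero_of_not_reachable h] using Fintype.card_pos_iff.2 ⟨x⟩

lemma exists_adj_le_compEccent_deleteIncidenceSet {x : V} {k : ℕ}
    (h : k + 1 ≤ G.compEccent x) :
    ∃ y, G.Adj x y ∧ k ≤ (G.deleteIncidenceSet x).compEccent y := by
  obtain ⟨v, -, hv⟩ := (Finset.le_sup_iff (by simp : (⊥ : ℕ) < k + 1)).1 h
  have hxv : G.Reachable x v := Reachable.of_dist_ne_zero (by omega)
  obtain ⟨p, hp, -⟩ := hxv.exists_path_of_dist
  cases p with
  | nil => simp at hv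
  | @cons _ y _ hxy q =>
    have hxq : x ∉ q.support := ((Walk.cons_isPath_iff hxy q).1 hp).2
    let q' : (G.deleteIncidenceSet x).Walk y v :=
      q.toDeleteEdges _ fun e he hex => hxq (Walk.mem_support_of_mem_edges he hex.2)
    refine ⟨y, hxy, ?_⟩
    calc k ≤ G.dist y v := by
          have := hxy.reachable.dist_triangle_left v
          rw [dist_eq_one_iff_adj.2 hxy] at this
          omega
      _ ≤ (G.deleteIncidenceSet x).dist y v :=
          q'.reachable.dist_anti (G.deleteIncidenceSet_le x)
      _ ≤ (G.deleteIncidenceSet x).compEccent y := dist_le_compEccent _ y v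

end SimpleGraph

open SimpleGraph

lemma graphOf_eq_graphOn_univ {n : ℕ} (ω : Sym2 (Fin n) → Bool) :
    graphOf ω = graphOn univ ω := by
  ext u v
  simp [graphOf, graphOn]

lemma compDiam_le_two_mul_compEccent {n : ℕ} (G : SimpleGraph (Fin n)) (x : Fin n) :
    compDiam G x ≤ 2 * G.compEccent x := by
  refine Finset.sup_le fun uv _ => ?_
  split_ifs with h
  · have := h.1.symm.dist_triangle_left uv.2
    have := G.dist_le_compEccent x uv.1
    have := G.dist_le_compEccent x uv.2
    have := G.dist_comm (u := uv.1) (v := x)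
    omega
  · exact Nat.zero_le _

namespace Real

lemma exp_neg_le_one_sub_inv_rpow {x s : ℝ} (hx : 1 < x) (hs : 0 ≤ s) :
    exp (-s) ≤ (1 - x⁻¹) ^ ((x - 1) * s) := by
  have hx1 : 0 < x - 1 := by linarith
  have hx' : 0 < 1 - x⁻¹ := sub_pos.2 (inv_lt_one_of_one_lt₀ hx)
  have hbase : exp (-(x - 1)⁻¹) ≤ 1 - x⁻¹ := by
    have h := add_one_le_exp (x - 1)⁻¹
    rw [exp_neg, inv_le_comm₀ (exp_pos _) hx']
    calc (1 - x⁻¹)⁻¹ = (x - 1)⁻¹ + 1 := by field_simp; ring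
      _ ≤ exp (x - 1)⁻¹ := h
  calc exp (-s) = exp (-(x - 1)⁻¹) ^ ((x - 1) * s) := by
        rw [← exp_mul]; field_simp
    _ ≤ (1 - x⁻¹) ^ ((x - 1) * s) := by gcongr

lemma one_sub_exp_neg_le {s : ℝ} (hs0 : 0 ≤ s) (hs1 : s ≤ 1) :
    1 - exp (-s) ≤ s - s ^ 2 / 3 := by
  have hexp := exp_bound' hs0 hs1 (n := 3) (by norm_num)
  norm_num [Finset.sum_range_succ, Nat.factorial] at hexp
  have hprod : (1 - s + s ^ 2 / 3) * exp s ≤ 1 := by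
    have hq : 0 ≤ 1 - s + s ^ 2 / 3 := by nlinarith
    calc (1 - s + s ^ 2 / 3) * exp s
        ≤ (1 - s + s ^ 2 / 3) * (1 + s + s ^ 2 / 2 + s ^ 3 * 4 / 18) := by gcongr
      _ ≤ 1 := by
        nlinarith [pow_nonneg hs0 3, pow_nonneg hs0 4, mul_nonneg hs0 (sub_nonneg.2 hs1)]
  have := (le_div_iff₀ (exp_pos s)).2 hprod
  rw [exp_neg, inv_eq_one_div]
  linarith

end Real

theorem bernoulliProb_succ_le_compEccent_graphOn_le {V : Type*} [Fintype V] [DecidableEq V]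
    {p : ℝ} (hp0 : 0 ≤ p) (hp1 : p < 1) (S : Finset V) (x : V) (k : ℕ) :
    bernoulliProb p (fun ω => k + 1 ≤ (graphOn S ω).compEccent x) ≤
      1 - (1 - p) ^ ∑ y ∈ S.erase x,
        bernoulliProb p (fun ω => k ≤ (graphOn (S.erase x) ω).compEccent y) := by
  refine bernoulliProb_le_of_imp_exists_open hp0 hp1 (c := fun y => s(x, y))
    (fun y _ y' _ h => Sym2.congr_right.1 h)
    (fun y ω => k ≤ (graphOn (S.erase x) ω).compEccent y) (fun y hy ω ω' hωω' => ?_) _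
    fun ω hω => ?_
  · rw [graphOn_congr fun u hu v hv => hωω' _ ?_]
    simp only [mem_image, Sym2.eq_iff, not_exists, not_and]
    rintro z - (⟨h, -⟩ | ⟨h, -⟩)
    · exact (mem_erase.1 hu).1 h.symm
    · exact (mem_erase.1 hv).1 h.symm
  · obtain ⟨y, ⟨-, hyS, hxy, hω⟩, hy⟩ := exists_adj_le_compEccent_deleteIncidenceSet _ hω
    exact ⟨y, mem_erase.2 ⟨hxy.symm, hyS⟩, hω, graphOn_erase S x ω ▸ hy⟩

lemma min_one_three_div_sub_le {k : ℝ} (hk : 1 ≤ k) :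
    min 1 (3 / k) - min 1 (3 / k) ^ 2 / 3 ≤ 3 / (k + 1) := by
  rcases le_total k 3 with hk3 | hk3
  · rw [min_eq_left ((le_div_iff₀ (by linarith)).2 (by linarith)),
      le_div_iff₀ (by linarith)]
    nlinarith
  · have hk0 : 0 < k := by linarith
    rw [min_eq_right ((div_le_one hk0).2 hk3),
      show 3 / k - (3 / k) ^ 2 / 3 = 3 * (k - 1) / k ^ 2 by field_simp,
      div_le_div_iff₀ (by positivity) (by positivity)]
    nlinarith

theorem bernoulliProb_le_compEccent_graphOn_le {n : ℕ} (hn : 2 ≤ n) {k : ℕ} (hk : 1 ≤ k)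
    (S : Finset (Fin n)) {x : Fin n} (hx : x ∈ S) :
    bernoulliProb (n : ℝ)⁻¹ (fun ω => k ≤ (graphOn S ω).compEccent x) ≤ 3 / k := by
  have hn1 : (1 : ℝ) < n := Nat.one_lt_cast.2 hn
  have hp0 : 0 ≤ (n : ℝ)⁻¹ := by positivity
  have hp1 : (n : ℝ)⁻¹ < 1 := inv_lt_one_of_one_lt₀ hn1
  induction k, hk using Nat.le_induction generalizing S x with
  | base => exact (bernoulliProb_le_one hp0 hp1.le _).trans (by norm_num)
  | succ k hk ih =>
    set s := min 1 (3 / (k : ℝ))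
    set T := S.erase x
    have hk' : (1 : ℝ) ≤ k := by exact_mod_cast hk
    have hs0 : 0 ≤ s := le_min zero_le_one (by positivity)
    have hsum :
        ∑ y ∈ T, bernoulliProb (n : ℝ)⁻¹ (fun ω => k ≤ (graphOn T ω).compEccent y) ≤
          (n - 1) * s := by
      have hT : (#T : ℝ) ≤ n - 1 := by
        have hTn : #T + 1 ≤ n := by
          simpa using (card_erase_add_one hx).trans_le (card_le_univ S)
        have : (#T : ℝ) + 1 ≤ n := by exact_mod_cast hTn
        linarith
      calc _ ≤ ∑ _y ∈ T, s := sum_le_sum fun y hy =>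
            le_min (bernoulliProb_le_one hp0 hp1.le _) (ih T hy)
        _ ≤ (n - 1) * s := by rw [sum_const, nsmul_eq_mul]; gcongr
    calc bernoulliProb (n : ℝ)⁻¹ (fun ω => k + 1 ≤ (graphOn S ω).compEccent x)
        ≤ 1 - (1 - (n : ℝ)⁻¹) ^ ((n - 1) * s) := by
          have := Real.rpow_le_rpow_of_exponent_ge (sub_pos.2 hp1) (by linarith) hsum
          linarith [bernoulliProb_succ_le_compEccent_graphOn_le hp0 hp1 S x k]
      _ ≤ 1 - Real.exp (-s) := by
          linarith [Real.exp_neg_le_one_sub_inv_rpow (x := n) hn1 hs0]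
      _ ≤ s - s ^ 2 / 3 := Real.one_sub_exp_neg_le hs0 (min_le_left _ _)
      _ ≤ 3 / ((k + 1 : ℕ) : ℝ) := by
          push_cast
          exact min_one_three_div_sub_le hk'

lemma natCast_eq_sum_Icc_ite {m N : ℕ} (h : m ≤ N) :
    (m : ℝ) = ∑ k ∈ Icc 1 N, if k ≤ m then 1 else 0 := by
  rw [sum_boole, show (Icc 1 N).filter (· ≤ m) = Icc 1 m by ext; simp; omega,
    Nat.card_Icc, Nat.add_sub_cancel]

theorem sum_bernoulliWeight_mul_compEccent_le {n : ℕ} (hn : 2 ≤ n) (x : Fin n) :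
    ∑ ω, bernoulliWeight (n : ℝ)⁻¹ ω * ((graphOf ω).compEccent x : ℝ) ≤
      3 * (1 + Real.log n) := by
  have hlt : ∀ ω : Sym2 (Fin n) → Bool, (graphOf ω).compEccent x ≤ n := fun ω =>
    ((graphOf ω).compEccent_lt_card x).le.trans_eq (Fintype.card_fin n)
  calc ∑ ω, bernoulliWeight (n : ℝ)⁻¹ ω * ((graphOf ω).compEccent x : ℝ)
      = ∑ k ∈ Icc 1 n,
          bernoulliProb (n : ℝ)⁻¹ (fun ω => k ≤ (graphOn univ ω).compEccent x) := by
        simp only [graphOf_eq_graphOn_univ] at hlt ⊢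
        simp only [fun ω => natCast_eq_sum_Icc_ite (hlt ω), mul_sum]
        exact sum_comm
    _ ≤ ∑ k ∈ Icc 1 n, 3 / (k : ℝ) := sum_le_sum fun k hk =>
        bernoulliProb_le_compEccent_graphOn_le hn (mem_Icc.1 hk).1 univ (mem_univ x)
    _ = 3 * harmonic n := by
        simp [harmonic_eq_sum_Icc, mul_sum, div_eq_mul_inv]
    _ ≤ 3 * (1 + Real.log n) := by gcongr; exact harmonic_le_one_add_log n

lemma integral_erMeasure {n : ℕ} (hn : n ≠ 0) (f : (Sym2 (Fin n) → Bool) → ℝ) :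
    ∫ ω, f ω ∂erMeasure n = ∑ ω, bernoulliWeight (n : ℝ)⁻¹ ω * f ω := by
  rw [integral_fintype Integrable.of_finite]
  refine sum_congr rfl fun ω _ => ?_
  rw [smul_eq_mul, Measure.real, ← Set.univ_pi_singleton ω, erMeasure, Measure.pi_pi,
    ENNReal.toReal_prod, bernoulliWeight]
  congr 1
  refine prod_congr rfl fun e _ => ?_
  have hinv : (n : ℝ≥0∞)⁻¹ ≤ 1 :=
    ENNReal.inv_le_one.2 (by exact_mod_cast Nat.one_le_iff_ne_zero.2 hn)
  rw [PMF.toMeasure_apply_singleton _ _ (measurableSet_singleton _), PMF.bernoulli_apply,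
    min_eq_left hinv]
  cases ω e
  · have h1 : (1 : NNReal) ≤ n := Nat.one_le_cast.2 (Nat.one_le_iff_ne_zero.2 hn)
    simp only [cond_false, ENNReal.toNNReal_inv, ENNReal.toNNReal_natCast, ENNReal.coe_toReal,
      NNReal.coe_sub (inv_le_one_of_one_le₀ h1)]
    simp
  · simp

/-- There is a universal constant `C > 0` such that for every `n ≥ 2`
and every `B ≥ 1`, the critical Erdős–Rényi graph `G(n, 1/n)` satisfies
`E[ (1/n) Σ_{x ∈ [n]} ( diam(C(x)) ∧ (B n^{1/3}) ) ] ≤ C log(Bn)`, i.e.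
`E[ E_S[ diam(S₁) ∧ (B n^{1/3}) ] ] ≤ C log(Bn)`. -/
theorem size_biased_diam_first_moment :
    ∃ C > (0 : ℝ), ∀ n : ℕ, 2 ≤ n → ∀ B : ℝ, 1 ≤ B →
      (∫ ω, (1 / (n : ℝ)) * ∑ x : Fin n,
          min (compDiam (graphOf ω) x : ℝ) (B * (n : ℝ) ^ ((1 : ℝ) / 3)) ∂ erMeasure n)
        ≤ C * Real.log (B * n) := by
  refine ⟨18, by norm_num, fun n hn B hB => ?_⟩
  have hlog : 1 + Real.log n ≤ 3 * Real.log (B * n) := by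
    have h2 := Real.log_le_log (by norm_num) (Nat.ofNat_le_cast.2 hn : (2 : ℝ) ≤ n)
    have hBn := Real.log_le_log (by positivity)
      (le_mul_of_one_le_left (by positivity) hB : (n : ℝ) ≤ B * n)
    linarith [Real.log_two_gt_d9]
  have hW := bernoulliWeight_nonneg (ι := Sym2 (Fin n)) (by positivity) (Nat.cast_inv_le_one n)
  rw [integral_erMeasure (by omega)]
  calc ∑ ω, bernoulliWeight (n : ℝ)⁻¹ ω * ((1 / (n : ℝ)) * ∑ x : Fin n,
          min (compDiam (graphOf ω) x : ℝ) (B * (n : ℝ) ^ ((1 : ℝ) / 3)))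
      ≤ ∑ ω, bernoulliWeight (n : ℝ)⁻¹ ω * ((1 / (n : ℝ)) * ∑ x : Fin n,
          2 * ((graphOf ω).compEccent x : ℝ)) := by
        gcongr with ω _ x
        · exact hW ω
        · exact (min_le_left _ _).trans (mod_cast compDiam_le_two_mul_compEccent _ x)
    _ = 2 / n * ∑ x : Fin n,
          ∑ ω, bernoulliWeight (n : ℝ)⁻¹ ω * ((graphOf ω).compEccent x : ℝ) := by
        simp only [mul_sum, sum_comm (γ := Fin n)]
        exact sum_congr rfl fun ω _ => sum_congr rfl fun x _ => by ring
    _ ≤ 2 / n * ∑ _x : Fin n, 3 * (1 + Real.log n) := by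
        gcongr with x
        exact sum_bernoulliWeight_mul_compEccent_le hn x
    _ = 6 * (1 + Real.log n) := by
        simp only [sum_const, card_univ, Fintype.card_fin, nsmul_eq_mul]
        field_simp
        norm_num
    _ ≤ 18 * Real.log (B * n) := by linarith
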